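/- For every integer q ≥ 2 and every real α with α > √((ln q)/2), there exists a natural number N such that for all n ≥ N, (1/q − 2α/(q√n) − 2/(qn))^(n/2 − α√n) · (1/q + 2α/(q√n) + 2/(qn))^(n/2 + α√n) ≥ q^(−(n−1)). -/

import Mathlib

/-!
With `δ = 2α/√n + 2/n` the two bases are `(1 ∓ δ)/q` and their exponents add up to `n`, so the
claim is `log q ≤ (n/2) log (1 - δ²) + α√n log ((1 + δ)/(1 - δ))`. The bound `log x ≥ 1 - 1/x`
makes the right side at least `-nδ²/(2(1 - δ²)) + 2α√n δ/(1 + δ)`, and since `√n δ → 2α` and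
`δ → 0` this tends to `-(2α)²/2 + (2α)² = 2α²`, which exceeds `log q` by the choice of `α`.
-/

open Filter Real Topology

namespace QaryInterval

lemma le_sub_mul_log_one_sub_add_add_mul_log_one_add {δ s t : ℝ} (hδ₀ : -1 < δ) (hδ₁ : δ < 1)
    (hs : 0 ≤ s) (ht : 0 ≤ t) :
    -(s * δ ^ 2 / (1 - δ ^ 2)) + 2 * t * δ / (1 + δ) ≤
      (s - t) * log (1 - δ) + (s + t) * log (1 + δ) := by
  have hm : 0 < 1 - δ := by linarith
  have hp : 0 < 1 + δ := by linarith
  have hsum : -(δ ^ 2 / (1 - δ ^ 2)) ≤ log (1 - δ) + log (1 + δ) := by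
    rw [← log_mul hm.ne' hp.ne']
    convert one_sub_inv_le_log_of_pos (mul_pos hm hp) using 1
    have hne : 1 - δ ^ 2 ≠ 0 := by nlinarith
    rw [show (1 - δ) * (1 + δ) = 1 - δ ^ 2 by ring]
    field_simp
    ring
  have hdiff : 2 * δ / (1 + δ) ≤ log (1 + δ) - log (1 - δ) := by
    rw [← log_div hp.ne' hm.ne']
    convert one_sub_inv_le_log_of_pos (div_pos hp hm) using 1
    field_simp
    ring
  calc -(s * δ ^ 2 / (1 - δ ^ 2)) + 2 * t * δ / (1 + δ)
      = s * -(δ ^ 2 / (1 - δ ^ 2)) + t * (2 * δ / (1 + δ)) := by ring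
    _ ≤ s * (log (1 - δ) + log (1 + δ)) + t * (log (1 + δ) - log (1 - δ)) := by gcongr
    _ = (s - t) * log (1 - δ) + (s + t) * log (1 + δ) := by ring

lemma rpow_neg_sub_one_le_div_rpow_mul_div_rpow {q x y a b m : ℝ} (hq : 0 < q) (hx : 0 < x)
    (hy : 0 < y) (hab : a + b = m) (h : log q ≤ a * log x + b * log y) :
    q ^ (-(m - 1)) ≤ (x / q) ^ a * (y / q) ^ b := by
  rw [div_rpow hx.le hq.le, div_rpow hy.le hq.le, div_mul_div_comm, ← rpow_add hq, hab,
    neg_sub, rpow_sub hq, rpow_one, div_le_div_iff_of_pos_right (rpow_pos_of_pos hq m),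
    ← log_le_log_iff hq (by positivity), log_mul (by positivity) (by positivity),
    log_rpow hx, log_rpow hy]
  exact h

noncomputable def deviation (α : ℝ) (n : ℕ) : ℝ := 2 * α / √n + 2 / n

lemma tendsto_inv_sqrt_natCast : Tendsto (fun n : ℕ => (√n)⁻¹) atTop (𝓝 0) :=
  tendsto_inv_atTop_zero.comp (tendsto_sqrt_atTop.comp tendsto_natCast_atTop_atTop)

lemma tendsto_deviation (α : ℝ) : Tendsto (deviation α) atTop (𝓝 0) := by
  unfold deviation
  have := (tendsto_inv_sqrt_natCast.const_mul (2 * α)).add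
    (tendsto_inv_atTop_zero.comp tendsto_natCast_atTop_atTop |>.const_mul 2)
  simpa [div_eq_mul_inv] using this

lemma sqrt_mul_deviation (α : ℝ) {n : ℕ} (hn : 0 < n) : √n * deviation α n = 2 * α + 2 / √n := by
  have hs : 0 < √(n : ℝ) := sqrt_pos.2 (by exact_mod_cast hn)
  rw [deviation]
  field_simp
  linear_combination mul_self_sqrt (Nat.cast_nonneg (α := ℝ) n)

lemma tendsto_sqrt_mul_deviation (α : ℝ) :
    Tendsto (fun n : ℕ => √n * deviation α n) atTop (𝓝 (2 * α)) := by
  have := (tendsto_inv_sqrt_natCast.const_mul 2).const_add (2 * α)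
  rw [mul_zero, add_zero] at this
  refine this.congr' ?_
  filter_upwards [eventually_gt_atTop 0] with n hn
  rw [sqrt_mul_deviation α hn, div_eq_mul_inv]

lemma tendsto_exponent_lower_bound (α : ℝ) :
    Tendsto (fun n : ℕ => -(n / 2 * deviation α n ^ 2 / (1 - deviation α n ^ 2)) +
      2 * (α * √n) * deviation α n / (1 + deviation α n)) atTop (𝓝 (2 * α ^ 2)) := by
  have hc := tendsto_sqrt_mul_deviation α
  have hδ := tendsto_deviation α
  have := ((((hc.pow 2).div_const 2).div ((hδ.pow 2).const_sub 1) (by norm_num)).neg).add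
    ((hc.const_mul (2 * α)).div (hδ.const_add 1) (by norm_num))
  convert this using 2 with n
  · simp only [Pi.div_apply]
    rw [mul_pow, sq_sqrt (Nat.cast_nonneg n)]
    ring
  · ring

end QaryInterval

/-- For every integer `q ≥ 2` and `α > √((ln q)/2)`, eventually
`(1/q - 2α/(q√n) - 2/(qn))^(n/2 - α√n) · (1/q + 2α/(q√n) + 2/(qn))^(n/2 + α√n) ≥ q^(-(n-1))`. -/
theorem qary_interval_length_ge_one_symbol (q : ℕ) (hq : 2 ≤ q) (α : ℝ)
    (hα : Real.sqrt (Real.log q / 2) < α) :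
    ∃ N : ℕ, ∀ n : ℕ, N ≤ n →
      (q : ℝ) ^ (-((n : ℝ) - 1)) ≤
        (1 / q - 2 * α / (q * Real.sqrt n) - 2 / (q * n)) ^ ((n : ℝ) / 2 - α * Real.sqrt n) *
          (1 / q + 2 * α / (q * Real.sqrt n) + 2 / (q * n)) ^ ((n : ℝ) / 2 + α * Real.sqrt n) := by
  open QaryInterval in
  have hq₀ : (0 : ℝ) < q := Nat.cast_pos.2 (by omega)
  have hα₀ : 0 < α := (sqrt_nonneg _).trans_lt hα
  have hlog : log q < 2 * α ^ 2 := by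
    have := (sqrt_lt' hα₀).1 hα
    linarith
  obtain ⟨N, hN⟩ := eventually_atTop.1 <|
    ((tendsto_exponent_lower_bound α).eventually (lt_mem_nhds hlog)).and <|
      ((tendsto_deviation α).eventually (gt_mem_nhds one_pos)).and (eventually_gt_atTop 0)
  refine ⟨N, fun n hn => ?_⟩
  obtain ⟨hbound, hδ₁, hn₀⟩ := hN n hn
  have hs : 0 < √(n : ℝ) := sqrt_pos.2 (by exact_mod_cast hn₀)
  have hδ₀ : 0 < deviation α n := by unfold deviation; positivity
  have hminus : 1 / q - 2 * α / (q * √n) - 2 / (q * n) = (1 - deviation α n) / q := by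
    unfold deviation; field_simp; ring
  have hplus : 1 / q + 2 * α / (q * √n) + 2 / (q * n) = (1 + deviation α n) / q := by
    unfold deviation; field_simp; ring
  rw [hminus, hplus]
  refine rpow_neg_sub_one_le_div_rpow_mul_div_rpow hq₀ (by linarith) (by linarith) (by ring) ?_
  exact hbound.le.trans <| le_sub_mul_log_one_sub_add_add_mul_log_one_add (by linarith) hδ₁
    (by positivity) (by positivity)
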